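/- arXiv:1311.1528 — 4 statements merged into one kernel-verified Lean document; each statement's English description precedes it below -/
import Mathlib

section
/- For any differentiable function f on [0,1] with f' square-integrable, the inequality ∫₀¹|f'(x)|²dx ≥ ∫₀¹|f(x)|²dx − |∫₀¹ f(x)dx|² holds. -/
/-!
Write `c = ∫₀¹ f` and `M = ∫₀¹ ‖f'‖`. The right-hand side is the variance `∫₀¹ ‖f - c‖²`.
By the fundamental theorem of calculus `‖f x - f y‖ ≤ M` on `[0,1]`, and averaging over `y` gives
`‖f x - c‖ ≤ M`, so the variance is at most `M²`. Finally `M² ≤ ∫₀¹ ‖f'‖²` is Cauchy–Schwarz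
(nonnegativity of the variance of `‖f'‖`).
-/

open MeasureTheory intervalIntegral Set

section Probability

variable {Ω E : Type*} [MeasurableSpace Ω] {μ : Measure Ω} [IsProbabilityMeasure μ]
  [NormedAddCommGroup E] [InnerProductSpace ℝ E] [CompleteSpace E]

theorem integral_norm_sub_integral_sq {f : Ω → E} (hf : MemLp f 2 μ) :
    ∫ x, ‖f x - ∫ y, f y ∂μ‖ ^ 2 ∂μ = ∫ x, ‖f x‖ ^ 2 ∂μ - ‖∫ y, f y ∂μ‖ ^ 2 := by
  set c := ∫ y, f y ∂μ
  have hf1 : Integrable f μ := hf.integrable one_le_two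
  have hf2 : Integrable (fun x => ‖f x‖ ^ 2) μ := (memLp_two_iff_integrable_sq_norm hf.1).1 hf
  have hinner : ∫ x, inner ℝ (f x) c ∂μ = ‖c‖ ^ 2 := by
    simp_rw [real_inner_comm c]
    rw [integral_inner hf1, real_inner_self_eq_norm_sq]
  have hcross : Integrable (fun x => 2 * inner ℝ (f x) c) μ := (hf1.inner_const c).const_mul 2
  simp_rw [norm_sub_sq_real]
  rw [integral_add (f := fun x => ‖f x‖ ^ 2 - 2 * inner ℝ (f x) c) (hf2.sub hcross)
      (integrable_const _), integral_sub hf2 hcross,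
    MeasureTheory.integral_const_mul, hinner]
  simp only [MeasureTheory.integral_const, probReal_univ, smul_eq_mul, one_mul]
  ring

theorem norm_sub_integral_le {f : Ω → E} (hf : Integrable f μ) {x : Ω} {M : ℝ}
    (h : ∀ᵐ y ∂μ, ‖f x - f y‖ ≤ M) : ‖f x - ∫ y, f y ∂μ‖ ≤ M := by
  have hmean : f x - ∫ y, f y ∂μ = ∫ y, (f x - f y) ∂μ := by
    rw [integral_sub (integrable_const _) hf, MeasureTheory.integral_const]
    simp
  simpa [hmean] using norm_integral_le_of_norm_le_const h

theorem integral_norm_sub_integral_sq_le {f : Ω → E} (hf : Integrable f μ) {M : ℝ}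
    (h : ∀ᵐ x ∂μ, ∀ᵐ y ∂μ, ‖f x - f y‖ ≤ M) :
    ∫ x, ‖f x - ∫ y, f y ∂μ‖ ^ 2 ∂μ ≤ M ^ 2 := by
  have hle : ∫ x, ‖f x - ∫ y, f y ∂μ‖ ^ 2 ∂μ ≤ ∫ _, M ^ 2 ∂μ := by
    refine integral_mono_of_nonneg (.of_forall fun x => by positivity) (integrable_const _) ?_
    filter_upwards [h] with x hx
    exact pow_le_pow_left₀ (norm_nonneg _) (norm_sub_integral_le hf hx) 2
  simpa using hle

theorem sq_integral_le_integral_sq {X : Ω → ℝ} (hX : MemLp X 2 μ) :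
    (∫ x, X x ∂μ) ^ 2 ≤ ∫ x, X x ^ 2 ∂μ := by
  have := ProbabilityTheory.variance_nonneg X μ
  rw [ProbabilityTheory.variance_eq_sub hX] at this
  simp only [Pi.pow_apply] at this
  linarith

end Probability

theorem norm_sub_le_integral_norm_deriv {E : Type*} [NormedAddCommGroup E] [NormedSpace ℝ E]
    [CompleteSpace E] {f f' : ℝ → E} {a b : ℝ} (hderiv : ∀ x ∈ Icc a b, HasDerivAt f (f' x) x)
    (hf' : IntervalIntegrable f' volume a b) {x y : ℝ} (hx : x ∈ Icc a b) (hy : y ∈ Icc a b) :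
    ‖f x - f y‖ ≤ ∫ t in a..b, ‖f' t‖ := by
  have hab : a ≤ b := hx.1.trans hx.2
  have hsub : uIoc y x ⊆ uIoc a b := by
    rw [uIoc_of_le hab]
    exact Ioc_subset_Ioc (le_min hy.1 hx.1) (max_le hy.2 hx.2)
  rw [← integral_eq_sub_of_hasDerivAt (fun t ht => hderiv t (uIcc_subset_Icc hy hx ht))
    (hf'.mono_set' hsub)]
  calc ‖∫ t in y..x, f' t‖ ≤ |∫ t in y..x, ‖f' t‖| := norm_integral_le_abs_integral_norm
    _ ≤ |∫ t in a..b, ‖f' t‖| :=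
        abs_integral_mono_interval hsub (.of_forall fun t => norm_nonneg _) hf'.norm
    _ = ∫ t in a..b, ‖f' t‖ := abs_of_nonneg (integral_nonneg hab fun t _ => norm_nonneg _)

theorem stmt_0_general (f f' : ℝ → ℂ)
    (hderiv : ∀ x ∈ Set.Icc (0:ℝ) 1, HasDerivAt f (f' x) x)
    (hf'L2 : IntervalIntegrable (fun x => ‖f' x‖^2) volume 0 1) :
    (∫ x in (0:ℝ)..1, ‖f' x‖^2) ≥
      (∫ x in (0:ℝ)..1, ‖f x‖^2) - ‖∫ x in (0:ℝ)..1, f x‖^2 := by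
  set μ := volume.restrict (Ioc (0:ℝ) 1)
  have : IsProbabilityMeasure μ := ⟨by simp [μ]⟩
  have hcont : ContinuousOn f (Icc 0 1) := fun x hx =>
    (hderiv x hx).continuousAt.continuousWithinAt
  have hf : MemLp f 2 μ :=
    (memLp_two_iff_integrable_sq_norm ((hcont.mono Ioc_subset_Icc_self).aestronglyMeasurable
      measurableSet_Ioc)).2 ((hcont.norm.pow 2).integrableOn_Icc.mono_set Ioc_subset_Icc_self)
  have hf' : MemLp f' 2 μ := by
    refine (memLp_two_iff_integrable_sq_norm ?_).2 hf'L2.1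
    refine (measurable_deriv f).aestronglyMeasurable.congr ?_
    exact ae_restrict_of_forall_mem measurableSet_Ioc fun x hx =>
      (hderiv x (Ioc_subset_Icc_self hx)).deriv
  have hf'int : IntervalIntegrable f' volume 0 1 :=
    (intervalIntegrable_iff_integrableOn_Ioc_of_le zero_le_one).2 (hf'.integrable one_le_two)
  have hosc : ∀ᵐ x ∂μ, ∀ᵐ y ∂μ, ‖f x - f y‖ ≤ ∫ t in (0:ℝ)..1, ‖f' t‖ :=
    ae_restrict_of_forall_mem measurableSet_Ioc fun x hx =>
      ae_restrict_of_forall_mem measurableSet_Ioc fun y hy =>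
        norm_sub_le_integral_norm_deriv hderiv hf'int (Ioc_subset_Icc_self hx)
          (Ioc_subset_Icc_self hy)
  have hvar := integral_norm_sub_integral_sq_le (hf.integrable one_le_two) hosc
  have hL1L2 := sq_integral_le_integral_sq hf'.norm
  simp only [integral_of_le zero_le_one] at hvar hL1L2 ⊢
  rw [integral_norm_sub_integral_sq hf] at hvar
  linarith

/-- Poincaré-type inequality with constant 1 after subtracting the mean:
for `f : [0,1] → ℂ` differentiable with square-integrable derivative,
`∫₀¹ |f'|² ≥ ∫₀¹ |f|² - |∫₀¹ f|²`. -/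
theorem stmt_0 (f f' : ℝ → ℂ)
    (hderiv : ∀ x ∈ Set.Icc (0:ℝ) 1, HasDerivAt f (f' x) x)
    (hf'L2 : IntervalIntegrable (fun x => ‖f' x‖^2) volume 0 1)
    (hfL2 : IntervalIntegrable (fun x => ‖f x‖^2) volume 0 1)
    (hfInt : IntervalIntegrable f volume 0 1) :
    (∫ x in (0:ℝ)..1, ‖f' x‖^2) ≥
      (∫ x in (0:ℝ)..1, ‖f x‖^2) - ‖∫ x in (0:ℝ)..1, f x‖^2 :=
  stmt_0_general f f' hderiv hf'L2
end

section
/- For 1 ≤ n ≤ |k|, the worst case error of A_n^{QMC} on the unit ball of H̃^s exceeds the initial error (2π|k|)^{-s}, i.e., the QMC rule is worse than the zero algorithm. -/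
open MeasureTheory Real Complex

noncomputable section

/-- The oscillatory integral `I_k(f) = ∫₀¹ f(x) e^{-2πikx} dx`. -/
def Ik (k : ℤ) (f : ℝ → ℂ) : ℂ :=
  ∫ x in (0:ℝ)..1, f x * Complex.exp (-(2 * Real.pi * Complex.I * (k : ℂ) * (x : ℂ)))

/-- The QMC rule `A_n^{QMC}(f) = (1/n) ∑_{j=1}^n f(j/n) e^{-2πikj/n}`. -/
def Aqmc (k : ℤ) (n : ℕ) (f : ℝ → ℂ) : ℂ :=
  (1 / (n : ℂ)) * ∑ j ∈ Finset.Icc 1 n,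
    f (j / n) * Complex.exp (-(2 * Real.pi * Complex.I * (k : ℂ) * ((j : ℂ) / (n : ℂ))))

/-- Membership in (the smooth part of) the periodic Sobolev space `H̃ˢ`. -/
def memPerHs (s : ℕ) (f : ℝ → ℂ) : Prop :=
  ContDiff ℝ s f ∧ ∀ ℓ < s, iteratedDeriv ℓ f 0 = iteratedDeriv ℓ f 1

/-- The squared `H̃ˢ` norm `‖f‖² = |∫₀¹ f|² + ‖f⁽ˢ⁾‖²_{L²}`. -/
def perNormSq (s : ℕ) (f : ℝ → ℂ) : ℝ :=
  ‖∫ x in (0:ℝ)..1, f x‖^2 + ∫ x in (0:ℝ)..1, ‖iteratedDeriv s f x‖^2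

/-- The worst case error of `A_n^{QMC}` over the unit ball of `H̃ˢ`. -/
def wceQmc (s : ℕ) (k : ℤ) (n : ℕ) : ℝ :=
  sSup {r : ℝ | ∃ f : ℝ → ℂ, memPerHs s f ∧ perNormSq s f ≤ 1 ∧ r = ‖Ik k f - Aqmc k n f‖}

/-!
Choose `m ≡ k (mod n)` with `|m| < |k|`, which `n ≤ |k|` allows. The Fourier mode
`e_m(x) = e^{2πimx}` has `H̃ˢ` norm `‖e_m‖ = max(1, (2π|m|)^s) < (2π|k|)^s`. By orthogonality
`I_k(e_m) = 0`, whereas on the grid `j/n` the mode `e_m` aliases to `e_k`, so `A_n^{QMC}(e_m) = 1`.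
Hence `e_m / ‖e_m‖` lies in the unit ball and has error `1 / ‖e_m‖ > (2π|k|)^{-s}`.

Since `wceQmc` is an `sSup` of reals, the errors must also be shown bounded above. On the unit
ball `|f| ≤ 2`: periodicity makes `f', …, f⁽ˢ⁾` mean-zero, so `‖f⁽ᵐ⁾‖_∞ ≤ ‖f⁽ᵐ⁺¹⁾‖_{L¹}`, and
`‖f⁽ˢ⁾‖_{L¹} ≤ (1 + ‖f⁽ˢ⁾‖²_{L²}) / 2 ≤ 1`.
-/

open Set
open scoped Interval

section

variable {E : Type*} [NormedAddCommGroup E] [NormedSpace ℝ E] [CompleteSpace E]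

lemma norm_sub_le_integral_norm_deriv_s5 {g : ℝ → E} (hg : ContDiff ℝ 1 g) {x y : ℝ}
    (hx : x ∈ Icc (0:ℝ) 1) (hy : y ∈ Icc (0:ℝ) 1) :
    ‖g x - g y‖ ≤ ∫ t in (0:ℝ)..1, ‖deriv g t‖ := by
  have hg' : Continuous (deriv g) := hg.continuous_deriv le_rfl
  have hunit : uIcc (0:ℝ) 1 = Icc 0 1 := uIcc_of_le zero_le_one
  rw [← intervalIntegral.integral_deriv_eq_sub (fun t _ => hg.differentiable one_ne_zero t)
    (hg'.intervalIntegrable y x), intervalIntegral.integral_of_le zero_le_one]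
  calc ‖∫ t in y..x, deriv g t‖ ≤ ∫ t in Ι y x, ‖deriv g t‖ :=
        intervalIntegral.norm_integral_le_integral_norm_uIoc
    _ ≤ ∫ t in Ι (0:ℝ) 1, ‖deriv g t‖ :=
        setIntegral_mono_set (hg'.norm.integrableOn_Icc.mono_set uIoc_subset_uIcc)
          (Filter.Eventually.of_forall fun t => norm_nonneg _)
          (Filter.Eventually.of_forall <| uIoc_subset_uIoc_of_uIcc_subset_uIcc <|
            uIcc_subset_uIcc (hunit ▸ hy) (hunit ▸ hx))
    _ = ∫ t in Ioc (0:ℝ) 1, ‖deriv g t‖ := by rw [uIoc_of_le zero_le_one]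

lemma norm_le_norm_integral_add_integral_norm_deriv {g : ℝ → E} (hg : ContDiff ℝ 1 g) {x : ℝ}
    (hx : x ∈ Icc (0:ℝ) 1) :
    ‖g x‖ ≤ ‖∫ t in (0:ℝ)..1, g t‖ + ∫ t in (0:ℝ)..1, ‖deriv g t‖ := by
  have hdev : ‖∫ t in (0:ℝ)..1, (g x - g t)‖ ≤ (∫ t in (0:ℝ)..1, ‖deriv g t‖) * |1 - 0| :=
    intervalIntegral.norm_integral_le_of_norm_le_const fun t ht =>
      norm_sub_le_integral_norm_deriv_s5 hg hx
        (Ioc_subset_Icc_self (by rwa [uIoc_of_le zero_le_one] at ht))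
  rw [intervalIntegral.integral_sub intervalIntegrable_const (hg.continuous.intervalIntegrable 0 1),
    intervalIntegral.integral_const] at hdev
  simp only [sub_zero, one_smul, abs_one, mul_one] at hdev
  calc ‖g x‖ = ‖(∫ t in (0:ℝ)..1, g t) + (g x - ∫ t in (0:ℝ)..1, g t)‖ := by
        rw [add_sub_cancel]
    _ ≤ _ := (norm_add_le _ _).trans (by gcongr)

end

lemma integral_norm_le_of_integral_norm_sq {E : Type*} [NormedAddCommGroup E] {g : ℝ → E}
    (hg : Continuous g) :
    ∫ t in (0:ℝ)..1, ‖g t‖ ≤ (1 + ∫ t in (0:ℝ)..1, ‖g t‖ ^ 2) / 2 := by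
  have hsq : IntervalIntegrable (fun t => ‖g t‖ ^ 2) volume 0 1 :=
    (hg.norm.pow 2).intervalIntegrable 0 1
  calc ∫ t in (0:ℝ)..1, ‖g t‖ ≤ ∫ t in (0:ℝ)..1, (1 + ‖g t‖ ^ 2) / 2 :=
        intervalIntegral.integral_mono_on zero_le_one (hg.norm.intervalIntegrable 0 1)
          ((intervalIntegrable_const.add hsq).div_const 2)
          fun t _ => by nlinarith [sq_nonneg (‖g t‖ - 1)]
    _ = (1 + ∫ t in (0:ℝ)..1, ‖g t‖ ^ 2) / 2 := by
        rw [intervalIntegral.integral_div,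
          intervalIntegral.integral_add intervalIntegrable_const hsq,
          intervalIntegral.integral_const]
        simp

section PeriodicSobolev

variable {s : ℕ} {f : ℝ → ℂ}

lemma integral_iteratedDeriv_succ_eq_zero (hf : memPerHs s f) {p : ℕ} (hp : p < s) :
    ∫ t in (0:ℝ)..1, iteratedDeriv (p + 1) f t = 0 := by
  rw [iteratedDeriv_succ, intervalIntegral.integral_deriv_eq_sub
    (fun t _ => hf.1.differentiable_iteratedDeriv p (by exact_mod_cast hp) t)
    (by simpa only [← iteratedDeriv_succ] using
      (hf.1.continuous_iteratedDeriv (p + 1) (by exact_mod_cast hp)).intervalIntegrable 0 1),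
    hf.2 p hp, sub_self]

lemma integral_norm_iteratedDeriv_le_succ (hf : memPerHs s f) {m : ℕ} (hm : 1 ≤ m)
    (hms : m < s) :
    ∫ t in (0:ℝ)..1, ‖iteratedDeriv m f t‖ ≤ ∫ t in (0:ℝ)..1, ‖iteratedDeriv (m + 1) f t‖ := by
  obtain ⟨p, rfl⟩ : ∃ p, m = p + 1 := ⟨m - 1, by omega⟩
  have hC1 : ContDiff ℝ 1 (iteratedDeriv (p + 1) f) := by
    rw [iteratedDeriv_eq_iterate]
    exact ContDiff.iterate_deriv' 1 (p + 1)
      (hf.1.of_le (by exact_mod_cast (by omega : 1 + (p + 1) ≤ s)))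
  have hpt : ∀ x ∈ Icc (0:ℝ) 1,
      ‖iteratedDeriv (p + 1) f x‖ ≤ ∫ t in (0:ℝ)..1, ‖iteratedDeriv (p + 1 + 1) f t‖ := by
    intro x hx
    simpa [integral_iteratedDeriv_succ_eq_zero hf (by omega : p < s), ← iteratedDeriv_succ]
      using norm_le_norm_integral_add_integral_norm_deriv hC1 hx
  calc ∫ t in (0:ℝ)..1, ‖iteratedDeriv (p + 1) f t‖
      ≤ ∫ t in (0:ℝ)..1, ∫ t in (0:ℝ)..1, ‖iteratedDeriv (p + 1 + 1) f t‖ :=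
        intervalIntegral.integral_mono_on zero_le_one
          (hC1.continuous.norm.intervalIntegrable 0 1) intervalIntegrable_const hpt
    _ = ∫ t in (0:ℝ)..1, ‖iteratedDeriv (p + 1 + 1) f t‖ := by simp

lemma integral_norm_deriv_le_integral_norm_iteratedDeriv (hf : memPerHs s f) (hs : 1 ≤ s) :
    ∫ t in (0:ℝ)..1, ‖deriv f t‖ ≤ ∫ t in (0:ℝ)..1, ‖iteratedDeriv s f t‖ := by
  suffices h : ∀ m, 1 ≤ m → m ≤ s →
      ∫ t in (0:ℝ)..1, ‖iteratedDeriv 1 f t‖ ≤ ∫ t in (0:ℝ)..1, ‖iteratedDeriv m f t‖ by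
    simpa only [iteratedDeriv_one] using h s hs le_rfl
  intro m hm
  induction m, hm using Nat.le_induction with
  | base => exact fun _ => le_rfl
  | succ m hm ih =>
    exact fun hms => (ih (by omega)).trans (integral_norm_iteratedDeriv_le_succ hf hm (by omega))

lemma norm_le_two_of_perNormSq_le_one (hs : 1 ≤ s) (hf : memPerHs s f) (hnorm : perNormSq s f ≤ 1)
    {x : ℝ} (hx : x ∈ Icc (0:ℝ) 1) : ‖f x‖ ≤ 2 := by
  have hsq_nonneg : 0 ≤ ∫ t in (0:ℝ)..1, ‖iteratedDeriv s f t‖ ^ 2 :=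
    intervalIntegral.integral_nonneg zero_le_one fun t _ => sq_nonneg _
  have hmean : ‖∫ t in (0:ℝ)..1, f t‖ ≤ 1 := by
    unfold perNormSq at hnorm
    nlinarith [norm_nonneg (∫ t in (0:ℝ)..1, f t)]
  have hderiv : ∫ t in (0:ℝ)..1, ‖deriv f t‖ ≤ 1 := by
    have := integral_norm_le_of_integral_norm_sq (hf.1.continuous_iteratedDeriv s le_rfl)
    have := integral_norm_deriv_le_integral_norm_iteratedDeriv hf hs
    unfold perNormSq at hnorm
    nlinarith [sq_nonneg ‖∫ t in (0:ℝ)..1, f t‖]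
  linarith [norm_le_norm_integral_add_integral_norm_deriv (hf.1.of_le (by exact_mod_cast hs)) hx]

end PeriodicSobolev

lemma norm_Ik_le {f : ℝ → ℂ} {M : ℝ} (hf : ∀ x ∈ Icc (0:ℝ) 1, ‖f x‖ ≤ M) (k : ℤ) :
    ‖Ik k f‖ ≤ M := by
  rw [Ik]
  simpa using intervalIntegral.norm_integral_le_of_norm_le_const (a := 0) (b := 1) fun x hx => by
    simpa [Complex.norm_exp] using
      hf x (Ioc_subset_Icc_self (by rwa [uIoc_of_le zero_le_one] at hx))

lemma norm_Aqmc_le {f : ℝ → ℂ} {M : ℝ} (hf : ∀ x ∈ Icc (0:ℝ) 1, ‖f x‖ ≤ M) (k : ℤ) {n : ℕ}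
    (hn : n ≠ 0) : ‖Aqmc k n f‖ ≤ M := by
  have hterm : ∀ j ∈ Finset.Icc 1 n, ‖f (j / n) *
      Complex.exp (-(2 * Real.pi * Complex.I * (k : ℂ) * ((j : ℂ) / (n : ℂ))))‖ ≤ M := by
    intro j hj
    have hj : (j : ℝ) / n ∈ Icc (0:ℝ) 1 :=
      ⟨by positivity, div_le_one_of_le₀ (by exact_mod_cast (Finset.mem_Icc.1 hj).2) n.cast_nonneg⟩
    simpa [Complex.norm_exp] using hf _ hj
  calc ‖Aqmc k n f‖ ≤ ‖1 / (n : ℂ)‖ * ∑ j ∈ Finset.Icc 1 n, M := by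
        rw [Aqmc, norm_mul]
        gcongr
        exact (norm_sum_le _ _).trans (Finset.sum_le_sum hterm)
    _ = M := by simp [hn]

lemma bddAbove_qmc_errors (s : ℕ) (hs : 1 ≤ s) (k : ℤ) {n : ℕ} (hn : n ≠ 0) :
    BddAbove {r : ℝ | ∃ f : ℝ → ℂ, memPerHs s f ∧ perNormSq s f ≤ 1 ∧
      r = ‖Ik k f - Aqmc k n f‖} := by
  refine ⟨2 + 2, ?_⟩
  rintro r ⟨f, hf, hnorm, rfl⟩
  have hsup := fun x (hx : x ∈ Icc (0:ℝ) 1) => norm_le_two_of_perNormSq_le_one hs hf hnorm hx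
  exact (norm_sub_le _ _).trans (add_le_add (norm_Ik_le hsup k) (norm_Aqmc_le hsup k hn))

def fourierMode (m : ℤ) (x : ℝ) : ℂ := Complex.exp (2 * π * I * m * x)

section FourierMode

variable (m : ℤ)

lemma hasDerivAt_fourierMode (x : ℝ) :
    HasDerivAt (fourierMode m) (2 * π * I * m * fourierMode m x) x := by
  have h : HasDerivAt (fun y : ℝ => 2 * π * I * m * (y : ℂ)) (2 * π * I * m) x := by
    simpa using ((hasDerivAt_id x).ofReal_comp).const_mul (2 * π * I * m : ℂ)
  exact h.cexp.congr_deriv (mul_comm _ _)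

lemma contDiff_fourierMode {N : WithTop ℕ∞} : ContDiff ℝ N (fourierMode m) :=
  ((Complex.contDiff_exp (𝕜 := ℂ)).restrict_scalars ℝ).comp
    (contDiff_const.mul Complex.ofRealCLM.contDiff)

lemma iteratedDeriv_fourierMode (ℓ : ℕ) :
    iteratedDeriv ℓ (fourierMode m) = fun x => (2 * π * I * m) ^ ℓ * fourierMode m x := by
  induction ℓ with
  | zero => simp
  | succ ℓ ih =>
    ext x
    rw [iteratedDeriv_succ, ih, ((hasDerivAt_fourierMode m x).const_mul _).deriv]
    ring

lemma fourierMode_intCast (d : ℤ) : fourierMode m d = 1 := by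
  rw [fourierMode, ← Complex.exp_int_mul_two_pi_mul_I (m * d)]
  push_cast
  ring_nf

lemma fourierMode_one_right : fourierMode m 1 = 1 := by
  exact_mod_cast fourierMode_intCast m 1

lemma norm_fourierMode (x : ℝ) : ‖fourierMode m x‖ = 1 := by
  simp [fourierMode, Complex.norm_exp]

lemma fourierMode_mul_exp (k : ℤ) (x : ℝ) :
    fourierMode m x * Complex.exp (-(2 * π * I * k * x)) = fourierMode (m - k) x := by
  rw [fourierMode, fourierMode, ← Complex.exp_add]
  push_cast
  ring_nf

lemma integral_fourierMode : ∫ x in (0:ℝ)..1, fourierMode m x = if m = 0 then 1 else 0 := by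
  split_ifs with hm
  · simp [hm, fourierMode]
  · have h2πm : (2 * π * I * m : ℂ) ≠ 0 := by simp [hm, Real.pi_ne_zero]
    have h1 := fourierMode_one_right m
    simp only [fourierMode, Complex.ofReal_one, mul_one] at h1
    simp [fourierMode, integral_exp_mul_complex h2πm, h1]

end FourierMode

def fourierModeNorm (s : ℕ) (m : ℤ) : ℝ := if m = 0 then 1 else (2 * π * |(m : ℝ)|) ^ s

lemma fourierModeNorm_pos (s : ℕ) (m : ℤ) : 0 < fourierModeNorm s m := by
  unfold fourierModeNorm
  split_ifs with hm
  · exact one_pos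
  · have : (m : ℝ) ≠ 0 := Int.cast_ne_zero.2 hm
    positivity

lemma fourierModeNorm_lt {s : ℕ} {m k : ℤ} (hs : 1 ≤ s) (hmk : |m| < |k|) :
    fourierModeNorm s m < (2 * π * |(k : ℝ)|) ^ s := by
  have hk : (1 : ℝ) ≤ |(k : ℝ)| := by
    rw [← Int.cast_abs]
    exact_mod_cast (abs_nonneg m).trans_lt hmk
  have hπk : 1 < 2 * π * |(k : ℝ)| := by nlinarith [Real.pi_gt_three]
  unfold fourierModeNorm
  split_ifs with hm
  · exact one_lt_pow₀ hπk (by omega)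
  · have hmk' : |(m : ℝ)| < |(k : ℝ)| := by simp only [← Int.cast_abs]; exact_mod_cast hmk
    exact pow_lt_pow_left₀ (by nlinarith [Real.pi_pos]) (by positivity) (by omega)

lemma memPerHs_const_mul_fourierMode (s : ℕ) (m : ℤ) (c : ℂ) :
    memPerHs s (fun x => c * fourierMode m x) := by
  refine ⟨contDiff_const.mul (contDiff_fourierMode m), fun ℓ _ => ?_⟩
  simp only [iteratedDeriv_const_mul_field, iteratedDeriv_fourierMode, fourierMode_one_right]
  simp [fourierMode]

lemma perNormSq_const_mul_fourierMode {s : ℕ} {m : ℤ} (hs : 1 ≤ s) (c : ℂ) :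
    perNormSq s (fun x => c * fourierMode m x) = (‖c‖ * fourierModeNorm s m) ^ 2 := by
  have hderiv : ∀ x, ‖iteratedDeriv s (fun x => c * fourierMode m x) x‖ ^ 2
      = (‖c‖ * (2 * π * |(m : ℝ)|) ^ s) ^ 2 := by
    intro x
    simp [iteratedDeriv_fourierMode, norm_fourierMode, abs_of_pos Real.pi_pos]
  simp only [perNormSq, hderiv, intervalIntegral.integral_const_mul, integral_fourierMode,
    intervalIntegral.integral_const, fourierModeNorm]
  split_ifs with hm
  · simp [hm, zero_pow (by omega : s ≠ 0)]
  · simp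

lemma Ik_const_mul_fourierMode (c : ℂ) {k m : ℤ} (hmk : m ≠ k) :
    Ik k (fun x => c * fourierMode m x) = 0 := by
  simp only [Ik, mul_assoc c, fourierMode_mul_exp, intervalIntegral.integral_const_mul,
    integral_fourierMode, if_neg (sub_ne_zero.2 hmk), mul_zero]

lemma Aqmc_const_mul_fourierMode (c : ℂ) {k m : ℤ} {n : ℕ} (hn : n ≠ 0) (hdvd : (n : ℤ) ∣ m - k) :
    Aqmc k n (fun x => c * fourierMode m x) = c := by
  obtain ⟨d, hd⟩ := hdvd
  have hterm : ∀ j ∈ Finset.Icc 1 n, c * fourierMode m (j / n) *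
      Complex.exp (-(2 * π * I * k * ((j : ℂ) / (n : ℂ)))) = c := by
    intro j _
    have hjn : (((j : ℝ) / n : ℝ) : ℂ) = (j : ℂ) / n := by push_cast; rfl
    rw [← hjn, mul_assoc c, fourierMode_mul_exp, hd]
    have hmode : fourierMode (n * d) (j / n) = fourierMode d j := by
      simp only [fourierMode]
      congr 1
      push_cast
      field_simp
    rw [hmode, show fourierMode d j = 1 by exact_mod_cast fourierMode_intCast d j, mul_one]
  rw [Aqmc, Finset.sum_congr rfl hterm]
  simp [hn]

lemma exists_abs_lt_dvd_sub {n : ℕ} {k : ℤ} (hn : 1 ≤ n) (hnk : (n : ℤ) ≤ |k|) :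
    ∃ m : ℤ, |m| < |k| ∧ (n : ℤ) ∣ m - k := by
  rcases le_or_gt 0 k with hk | hk
  · refine ⟨k - n, ?_, ⟨-1, by ring⟩⟩
    rw [abs_of_nonneg hk] at hnk ⊢
    rw [abs_lt]
    omega
  · refine ⟨k + n, ?_, ⟨1, by ring⟩⟩
    rw [abs_of_neg hk] at hnk ⊢
    rw [abs_lt]
    omega

/-- For `1 ≤ n ≤ |k|`, the worst case error of the QMC rule on the unit ball of
`H̃ˢ` exceeds the initial error `(2π|k|)^{-s}`: the QMC rule is worse than the
zero algorithm. -/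
theorem stmt_5 (s : ℕ) (hs : 1 ≤ s) (k : ℤ) (n : ℕ) (hn1 : 1 ≤ n)
    (hn2 : (n : ℤ) ≤ |k|) :
    wceQmc s k n > 1 / (2 * Real.pi * |(k : ℝ)|)^s := by
  have hn : n ≠ 0 := by omega
  obtain ⟨m, hmk, hdvd⟩ := exists_abs_lt_dvd_sub hn1 hn2
  have hm_pos := fourierModeNorm_pos s m
  set c : ℝ := (fourierModeNorm s m)⁻¹
  have hc : 0 < c := inv_pos.2 hm_pos
  have hwitness : c ∈ {r : ℝ | ∃ f : ℝ → ℂ, memPerHs s f ∧ perNormSq s f ≤ 1 ∧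
      r = ‖Ik k f - Aqmc k n f‖} := by
    refine ⟨fun x => (c : ℂ) * fourierMode m x, memPerHs_const_mul_fourierMode s m c, ?_, ?_⟩
    · rw [perNormSq_const_mul_fourierMode hs, Complex.norm_real, Real.norm_of_nonneg hc.le,
        inv_mul_cancel₀ hm_pos.ne']
      norm_num
    · rw [Ik_const_mul_fourierMode _ (by rintro rfl; exact lt_irrefl _ hmk),
        Aqmc_const_mul_fourierMode _ hn hdvd, zero_sub, norm_neg, Complex.norm_real,
        Real.norm_of_nonneg hc.le]
  calc 1 / (2 * π * |(k : ℝ)|) ^ s < c := by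
        rw [one_div]
        exact inv_strictAnti₀ hm_pos (fourierModeNorm_lt hs hmk)
    _ ≤ wceQmc s k n := le_csSup (bddAbove_qmc_errors s hs k hn) hwitness
end
end

section
/- For ℓ ≤ s, the normalized Bernoulli polynomial B*_ℓ = B_ℓ/ℓ! represents the boundary functional: for all f ∈ H^s, ⟨f, B*_ℓ⟩_s = f^{(ℓ−1)}(1) − f^{(ℓ−1)}(0). Moreover ‖B*_ℓ‖_{H^s} = 1 and ⟨B*_ℓ, B*_m⟩_s = 0 for distinct ℓ, m ∈ {0,1,…,s}. -/
open MeasureTheory Real Complex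

noncomputable section

/-- The normalized Bernoulli polynomial `B*_ℓ = B_ℓ/ℓ!` as a function `ℝ → ℂ`. -/
def Bstar (ℓ : ℕ) (x : ℝ) : ℂ :=
  ((Polynomial.bernoulli ℓ).map (algebraMap ℚ ℂ)).eval (x : ℂ) / (Nat.factorial ℓ)

/-- The `Hˢ` inner product
`⟨f,g⟩_s = ∑_{ℓ<s} (∫₀¹ f⁽ℓ⁾)·conj(∫₀¹ g⁽ℓ⁾) + ∫₀¹ f⁽ˢ⁾ conj(g⁽ˢ⁾)`. -/
def hsInner (s : ℕ) (f g : ℝ → ℂ) : ℂ :=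
  (∑ ℓ ∈ Finset.range s,
    (∫ x in (0:ℝ)..1, iteratedDeriv ℓ f x) *
      (starRingEnd ℂ) (∫ x in (0:ℝ)..1, iteratedDeriv ℓ g x)) +
  ∫ x in (0:ℝ)..1, iteratedDeriv s f x * (starRingEnd ℂ) (iteratedDeriv s g x)

/-- The squared `Hˢ` norm. -/
def hsNormSq (s : ℕ) (f : ℝ → ℂ) : ℝ :=
  (∑ ℓ ∈ Finset.range s, ‖∫ x in (0:ℝ)..1, iteratedDeriv ℓ f x‖^2) +
  ∫ x in (0:ℝ)..1, ‖iteratedDeriv s f x‖^2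

/-! Since `[B*_ℓ]' = B*_{ℓ-1}`, the `j`-th derivative of `B*_ℓ` is `B*_{ℓ-j}` for `j ≤ ℓ` and `0`
beyond, and its mean over `[0,1]` is `δ_{jℓ}`. Hence for `ℓ ≤ s` every term of `⟨f, B*_ℓ⟩_s` but one
vanishes and `⟨f, B*_ℓ⟩_s = ∫₀¹ f^{(ℓ)}`. For `ℓ ≥ 1` this is `f^{(ℓ-1)}(1) - f^{(ℓ-1)}(0)` by the
fundamental theorem of calculus, and for `f = B*_m` it is `δ_{mℓ}`. -/

theorem Bstar_eq_bernoulliFun (ℓ : ℕ) (x : ℝ) :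
    Bstar ℓ x = (bernoulliFun ℓ x : ℂ) / ℓ.factorial := by
  rw [Bstar, bernoulliFun, IsScalarTower.algebraMap_eq ℚ ℝ ℂ, ← Polynomial.map_map,
    Polynomial.eval_map, show (x : ℂ) = algebraMap ℝ ℂ x from rfl,
    Polynomial.eval₂_at_apply, Complex.coe_algebraMap]

theorem Bstar_zero : Bstar 0 = fun _ => 1 := by
  funext x
  simp [Bstar_eq_bernoulliFun, bernoulliFun_zero]

theorem hasDerivAt_Bstar_succ (ℓ : ℕ) (x : ℝ) : HasDerivAt (Bstar (ℓ + 1)) (Bstar ℓ x) x := by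
  rw [show Bstar (ℓ + 1) = _ from funext (Bstar_eq_bernoulliFun (ℓ + 1))]
  refine ((hasDerivAt_bernoulliFun (ℓ + 1) x).ofReal_comp.div_const _).congr_deriv ?_
  rw [Bstar_eq_bernoulliFun, Nat.add_sub_cancel, Nat.factorial_succ]
  push_cast
  rw [mul_div_mul_left _ _ (Nat.cast_add_one_ne_zero ℓ)]

theorem deriv_Bstar_succ (ℓ : ℕ) : deriv (Bstar (ℓ + 1)) = Bstar ℓ :=
  funext fun x => (hasDerivAt_Bstar_succ ℓ x).deriv

theorem iteratedDeriv_Bstar_add (j ℓ : ℕ) : iteratedDeriv j (Bstar (ℓ + j)) = Bstar ℓ := by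
  induction j with
  | zero => exact iteratedDeriv_zero
  | succ j ih => rw [iteratedDeriv_succ', ← add_assoc, deriv_Bstar_succ, ih]

theorem iteratedDeriv_Bstar_of_le {j ℓ : ℕ} (h : j ≤ ℓ) :
    iteratedDeriv j (Bstar ℓ) = Bstar (ℓ - j) := by
  rw [← iteratedDeriv_Bstar_add j (ℓ - j), Nat.sub_add_cancel h]

theorem iteratedDeriv_Bstar_of_lt {j ℓ : ℕ} (h : ℓ < j) (x : ℝ) :
    iteratedDeriv j (Bstar ℓ) x = 0 := by
  obtain ⟨k, rfl⟩ := Nat.exists_eq_add_of_lt h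
  rw [iteratedDeriv_eq_iterate, show ℓ + k + 1 = (k + 1) + ℓ by omega, Function.iterate_add_apply,
    ← iteratedDeriv_eq_iterate, ← iteratedDeriv_eq_iterate, iteratedDeriv_Bstar_of_le le_rfl,
    Nat.sub_self, Bstar_zero, iteratedDeriv_const, if_neg k.succ_ne_zero]

theorem integral_Bstar (ℓ : ℕ) : ∫ x in (0 : ℝ)..1, Bstar ℓ x = if ℓ = 0 then 1 else 0 := by
  simp only [Bstar_eq_bernoulliFun, intervalIntegral.integral_div, intervalIntegral.integral_ofReal,
    integral_bernoulliFun]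
  split_ifs with h <;> simp [h]

theorem integral_iteratedDeriv_Bstar (j ℓ : ℕ) :
    ∫ x in (0 : ℝ)..1, iteratedDeriv j (Bstar ℓ) x = if j = ℓ then 1 else 0 := by
  rcases le_or_gt j ℓ with h | h
  · rw [iteratedDeriv_Bstar_of_le h, integral_Bstar]
    exact if_congr (by omega) rfl rfl
  · simp [iteratedDeriv_Bstar_of_lt h, h.ne']

theorem hsInner_Bstar {s ℓ : ℕ} (hℓ : ℓ ≤ s) (f : ℝ → ℂ) :
    hsInner s f (Bstar ℓ) = ∫ x in (0 : ℝ)..1, iteratedDeriv ℓ f x := by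
  simp only [hsInner, integral_iteratedDeriv_Bstar]
  rcases hℓ.lt_or_eq with h | rfl
  · simp [iteratedDeriv_Bstar_of_lt h, Finset.mem_range.mpr h]
  · rw [iteratedDeriv_Bstar_of_le le_rfl, Nat.sub_self, Bstar_zero]
    simp [Finset.sum_ite_eq']

theorem integral_iteratedDeriv_succ_eq_sub {E : Type*} [NormedAddCommGroup E] [NormedSpace ℝ E]
    [CompleteSpace E] {n m : ℕ} {f : ℝ → E} (hf : ContDiff ℝ n f) (hm : m < n) (a b : ℝ) :
    ∫ x in a..b, iteratedDeriv (m + 1) f x = iteratedDeriv m f b - iteratedDeriv m f a := by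
  rw [iteratedDeriv_succ]
  refine intervalIntegral.integral_deriv_eq_sub
    (fun x _ => (hf.differentiable_iteratedDeriv m (mod_cast hm)).differentiableAt) ?_
  rw [← iteratedDeriv_succ]
  exact (hf.continuous_iteratedDeriv (m + 1) (mod_cast hm)).intervalIntegrable _ _

theorem stmt_13_general (s : ℕ) :
    (∀ ℓ : ℕ, 1 ≤ ℓ → ℓ ≤ s → ∀ f : ℝ → ℂ, ContDiff ℝ s f →
      hsInner s f (Bstar ℓ) = iteratedDeriv (ℓ-1) f 1 - iteratedDeriv (ℓ-1) f 0) ∧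
    (∀ ℓ : ℕ, ℓ ≤ s → hsInner s (Bstar ℓ) (Bstar ℓ) = 1) ∧
    (∀ ℓ m : ℕ, ℓ ≤ s → m ≤ s → ℓ ≠ m → hsInner s (Bstar ℓ) (Bstar m) = 0) := by
  refine ⟨fun ℓ hℓ₁ hℓs f hf => ?_, fun ℓ hℓ => ?_, fun ℓ m _ hm hne => ?_⟩
  · obtain ⟨k, rfl⟩ := Nat.exists_eq_add_of_le' hℓ₁
    rw [hsInner_Bstar hℓs, Nat.add_sub_cancel, integral_iteratedDeriv_succ_eq_sub hf hℓs]
  · rw [hsInner_Bstar hℓ, integral_iteratedDeriv_Bstar, if_pos rfl]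
  · rw [hsInner_Bstar hm, integral_iteratedDeriv_Bstar, if_neg hne.symm]

/-- The normalized Bernoulli polynomial `B*_ℓ` represents the boundary functional
`f ↦ f⁽ℓ⁻¹⁾(1) - f⁽ℓ⁻¹⁾(0)` in `Hˢ`; moreover `‖B*_ℓ‖_{Hˢ} = 1` for `ℓ ≤ s`, and
`B*_ℓ ⟂ B*_m` for distinct `ℓ, m ∈ {0,…,s}`. -/
theorem stmt_13 (s : ℕ) (hs : 1 ≤ s) :
    (∀ ℓ : ℕ, 1 ≤ ℓ → ℓ ≤ s → ∀ f : ℝ → ℂ, ContDiff ℝ s f →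
      hsInner s f (Bstar ℓ) = iteratedDeriv (ℓ-1) f 1 - iteratedDeriv (ℓ-1) f 0) ∧
    (∀ ℓ : ℕ, ℓ ≤ s → hsInner s (Bstar ℓ) (Bstar ℓ) = 1) ∧
    (∀ ℓ m : ℕ, ℓ ≤ s → m ≤ s → ℓ ≠ m → hsInner s (Bstar ℓ) (Bstar m) = 0) :=
  stmt_13_general s
end
end

section
/- Polynomials are dense in H^∞ = {f ∈ C^∞([0,1]) : ∑_{ℓ=0}^∞ ‖f^{(ℓ)}‖²_{L²} < ∞} with respect to the norm ‖f‖ = (∑_{ℓ=0}^∞ ‖f^{(ℓ)}‖²_{L²})^{1/2}: for every f ∈ H^∞ and ε > 0, there is a polynomial p (a Taylor polynomial of f at 1/2) with ∑_{ℓ=0}^∞ ‖f^{(ℓ)} − p^{(ℓ)}‖²_{L²} ≤ ε². -/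
open MeasureTheory

noncomputable section

open Polynomial intervalIntegral


lemma poincare_half (g g' : ℝ → ℂ) (hd : ∀ x, HasDerivAt g (g' x) x)
    (hc : Continuous g') (h0 : g (1/2 : ℝ) = 0) :
    (∫ x in (0:ℝ)..1, ‖g x‖^2) ≤ (1/2) * ∫ x in (0:ℝ)..1, ‖g' x‖^2 := by
  have hgc : Continuous g := continuous_iff_continuousAt.2 fun x => (hd x).continuousAt
  set I₀ : ℝ := ∫ x in (0:ℝ)..1, ‖g' x‖^2 with hI₀
  have hI₀nn : 0 ≤ I₀ := by
    apply intervalIntegral.integral_nonneg (by norm_num)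
    intro x _; positivity
  have hsqint : ∀ a b : ℝ, IntervalIntegrable (fun t => ‖g' t‖^2) volume a b :=
    fun a b => ((hc.norm.pow 2).intervalIntegrable a b)
  -- pointwise bound
  have key : ∀ x ∈ Set.Icc (0:ℝ) 1, ‖g x‖^2 ≤ I₀ / 2 := by
    intro x hx
    obtain ⟨hx0, hx1⟩ := hx
    -- FTC
    have hftc : (∫ t in (1/2 : ℝ)..x, g' t) = g x := by
      rw [intervalIntegral.integral_eq_sub_of_hasDerivAt (fun t _ => hd t)
        (hc.intervalIntegrable _ _), h0, sub_zero]
    have hb1 : ‖g x‖ ≤ |∫ t in (1/2 : ℝ)..x, ‖g' t‖| := by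
      rw [← hftc]; exact intervalIntegral.norm_integral_le_abs_integral_norm
    -- the estimate on the abs integral
    have habs : ∀ η : ℝ, 0 < η → |∫ t in (1/2 : ℝ)..x, ‖g' t‖| ≤ Real.sqrt (2*(I₀+η)) / 2 := by
      intro η hη
      set c : ℝ := Real.sqrt (2*(I₀+η)) with hcdef
      have hcpos : 0 < c := Real.sqrt_pos.2 (by linarith)
      have hcsq : c^2 = 2*(I₀+η) := Real.sq_sqrt (by linarith)
      -- reduce to ordered endpoints
      set a : ℝ := min x (1/2) with ha
      set b : ℝ := max x (1/2) with hb
      have hab : a ≤ b := min_le_max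
      have h0a : 0 ≤ a := le_min hx0 (by norm_num)
      have hb1' : b ≤ 1 := max_le hx1 (by norm_num)
      have hba : b - a ≤ 1/2 := by
        rcases le_total x (1/2) with h | h
        · rw [ha, hb, min_eq_left h, max_eq_right h]; linarith
        · rw [ha, hb, min_eq_right h, max_eq_left h]; linarith
      have habs_eq : |∫ t in (1/2 : ℝ)..x, ‖g' t‖| = ∫ t in a..b, ‖g' t‖ := by
        rcases le_total x (1/2) with h | h
        · rw [ha, hb, min_eq_left h, max_eq_right h,
            intervalIntegral.integral_symm, abs_neg, abs_of_nonneg]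
          exact intervalIntegral.integral_nonneg h (fun t _ => norm_nonneg _)
        · rw [ha, hb, min_eq_right h, max_eq_left h, abs_of_nonneg]
          exact intervalIntegral.integral_nonneg h (fun t _ => norm_nonneg _)
      rw [habs_eq]
      have hmono : (∫ t in a..b, ‖g' t‖) ≤ ∫ t in a..b, (c/2 + ‖g' t‖^2/(2*c)) := by
        apply intervalIntegral.integral_mono_on hab
          (hc.norm.intervalIntegrable a b)
          ((continuous_const.add ((hc.norm.pow 2).div_const _)).intervalIntegrable a b)
        intro t _
        have h2 : c/2 + ‖g' t‖^2/(2*c) - ‖g' t‖ = (‖g' t‖ - c)^2/(2*c) := by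
          field_simp; ring
        have h3 : 0 ≤ (‖g' t‖ - c)^2/(2*c) := by positivity
        show ‖g' t‖ ≤ c/2 + ‖g' t‖^2/(2*c)
        linarith
      have hsplit : (∫ t in a..b, (c/2 + ‖g' t‖^2/(2*c)))
          = (b - a) * (c/2) + (∫ t in a..b, ‖g' t‖^2) / (2*c) := by
        rw [intervalIntegral.integral_add (intervalIntegrable_const)
          ((hsqint a b).div_const _), intervalIntegral.integral_const,
          intervalIntegral.integral_div, smul_eq_mul]
      have hsub : (∫ t in a..b, ‖g' t‖^2) ≤ I₀ := by
        apply intervalIntegral.integral_mono_interval h0a hab hb1'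
          (Filter.Eventually.of_forall (fun t => by positivity)) (hsqint 0 1)
      have : (∫ t in a..b, (c/2 + ‖g' t‖^2/(2*c))) ≤ c/2 := by
        rw [hsplit]
        have e1 : (b - a) * (c/2) ≤ (1/2) * (c/2) := by
          apply mul_le_mul_of_nonneg_right hba (by positivity)
        have e2 : (∫ t in a..b, ‖g' t‖^2) / (2*c) ≤ (I₀ + η) / (2*c) := by
          apply div_le_div_of_nonneg_right _ (by positivity)
          · linarith
        have e3 : (I₀ + η) / (2*c) = c/4 := by
          rw [div_eq_div_iff (by positivity) (by positivity : (4:ℝ) ≠ 0)]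
          nlinarith [hcsq]
        linarith
      linarith
    -- take η → 0
    have hles : ∀ δ : ℝ, 0 < δ → ‖g x‖^2 ≤ I₀/2 + δ := by
      intro δ hδ
      have h1 := habs (2*δ) (by linarith)
      have h2 : ‖g x‖ ≤ Real.sqrt (2*(I₀+2*δ)) / 2 := le_trans hb1 h1
      have h3 : ‖g x‖^2 ≤ (Real.sqrt (2*(I₀+2*δ)) / 2)^2 :=
        pow_le_pow_left₀ (norm_nonneg _) h2 2
      have h4 : (Real.sqrt (2*(I₀+2*δ)) / 2)^2 = (2*(I₀+2*δ))/4 := by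
        rw [div_pow, Real.sq_sqrt (by linarith)]; norm_num
      rw [h4] at h3; linarith
    exact le_of_forall_pos_le_add hles
  calc (∫ x in (0:ℝ)..1, ‖g x‖^2) ≤ ∫ _x in (0:ℝ)..1, I₀/2 := by
        apply intervalIntegral.integral_mono_on (by norm_num)
          ((hgc.norm.pow 2).intervalIntegrable 0 1) intervalIntegrable_const key
    _ = (1/2) * I₀ := by rw [intervalIntegral.integral_const, smul_eq_mul]; ring


lemma iteratedDeriv_polyEval (p : Polynomial ℂ) (ℓ : ℕ) :
    iteratedDeriv ℓ (fun y : ℝ => p.eval (y : ℂ))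
      = fun y : ℝ => ((Polynomial.derivative)^[ℓ] p).eval (y : ℂ) := by
  induction ℓ with
  | zero => simp [iteratedDeriv_zero]
  | succ ℓ ih =>
    rw [iteratedDeriv_succ, ih]
    funext y
    rw [Function.iterate_succ_apply']
    exact (((Polynomial.derivative^[ℓ] p).hasDerivAt ((y:ℝ):ℂ)).comp_ofReal).deriv

-- evaluation of iterated derivatives of the Taylor-style polynomial at the center


lemma iterate_derivative_taylor_eval (n : ℕ) (a : ℕ → ℂ) (r : ℂ) (ℓ : ℕ) (hℓ : ℓ < n) :
    ((Polynomial.derivative)^[ℓ]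
      (∑ k ∈ Finset.range n, Polynomial.C (a k / k.factorial) * (Polynomial.X - Polynomial.C r)^k)).eval r
      = a ℓ := by
  set p : Polynomial ℂ := ∑ k ∈ Finset.range n, Polynomial.C (a k / k.factorial) * (Polynomial.X - Polynomial.C r)^k with hp
  have htaylor : Polynomial.taylor r p = ∑ k ∈ Finset.range n, Polynomial.C (a k / k.factorial) * Polynomial.X ^ k := by
    rw [hp, Polynomial.taylor_apply]
    rw [Polynomial.sum_comp]
    congr 1
    funext k
    simp [Polynomial.mul_comp, Polynomial.pow_comp, Polynomial.sub_comp]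
  have hcoeff : (Polynomial.taylor r p).coeff ℓ = a ℓ / ℓ.factorial := by
    rw [htaylor, Polynomial.finset_sum_coeff]
    rw [Finset.sum_eq_single ℓ]
    · simp
    · intro k _ hk
      simp [Polynomial.coeff_C_mul, Polynomial.coeff_X_pow, (Ne.symm hk)]
    · intro h; exact absurd (Finset.mem_range.2 hℓ) h
  have h1 : (Polynomial.derivative^[ℓ] p) = ℓ.factorial • Polynomial.hasseDeriv ℓ p := by
    rw [← Polynomial.factorial_smul_hasseDeriv]; rfl
  rw [h1]
  have h2 : (Polynomial.hasseDeriv ℓ p).eval r = (Polynomial.taylor r p).coeff ℓ := by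
    rw [Polynomial.taylor_coeff]
  simp only [Polynomial.eval_smul, smul_eq_mul] at *
  rw [h2, hcoeff, nsmul_eq_mul,
    mul_div_cancel₀ _ (by exact_mod_cast ℓ.factorial_ne_zero : ((ℓ.factorial : ℂ)) ≠ 0)]


lemma iterate_derivative_taylor_zero (n : ℕ) (a : ℕ → ℂ) (r : ℂ) (ℓ : ℕ) (hℓ : n ≤ ℓ) :
    (Polynomial.derivative)^[ℓ]
      (∑ k ∈ Finset.range n, Polynomial.C (a k / k.factorial) * (Polynomial.X - Polynomial.C r)^k) = 0 := by
  rcases Nat.eq_zero_or_pos n with hn | hn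
  · subst hn
    simp only [Finset.range_zero, Finset.sum_empty]
    induction ℓ with
    | zero => simp
    | succ m ih => rw [Function.iterate_succ_apply', ih (Nat.zero_le m)]; simp
  · apply Polynomial.iterate_derivative_eq_zero
    calc (∑ k ∈ Finset.range n, Polynomial.C (a k / k.factorial) * (Polynomial.X - Polynomial.C r)^k).natDegree
        ≤ n - 1 := by
          apply Polynomial.natDegree_sum_le_of_forall_le
          intro k hk
          calc (Polynomial.C (a k / k.factorial) * (Polynomial.X - Polynomial.C r)^k).natDegree
              ≤ (Polynomial.C (a k / k.factorial)).natDegree + ((Polynomial.X - Polynomial.C r)^k).natDegree :=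
                Polynomial.natDegree_mul_le
            _ ≤ 0 + k * 1 := by
                apply add_le_add (le_of_eq (Polynomial.natDegree_C _))
                exact (Polynomial.natDegree_pow_le).trans
                  (Nat.mul_le_mul_left k (Polynomial.natDegree_X_sub_C_le r))
            _ ≤ n - 1 := by
                have := Finset.mem_range.1 hk; omega
      _ < ℓ := by omega


lemma geom_half_sum_le (n : ℕ) : (∑ i ∈ Finset.range n, ((1:ℝ)/2)^(n - i)) ≤ 1 := by
  rw [← Finset.sum_range_reflect]
  have : ∀ j ∈ Finset.range n, ((1:ℝ)/2)^(n - (n - 1 - j)) = (1/2)^(j+1) := by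
    intro j hj; congr 1; have := Finset.mem_range.1 hj; omega
  rw [Finset.sum_congr rfl this]
  have h2 : ∑ j ∈ Finset.range n, ((1:ℝ)/2)^(j+1) = (1/2) * ∑ j ∈ Finset.range n, ((1:ℝ)/2)^j := by
    rw [Finset.mul_sum]; exact Finset.sum_congr rfl (fun j _ => by ring)
  rw [h2]
  have h3 : ∑ j ∈ Finset.range n, ((1:ℝ)/2)^j ≤ 2 := by
    have := geom_sum_eq (by norm_num : (1:ℝ)/2 ≠ 1) n
    rw [this, show ((1/2:ℝ)^n - 1)/(1/2 - 1) = 2*(1 - (1/2)^n) by ring]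
    have : (0:ℝ) ≤ (1/2)^n := by positivity
    linarith
  linarith




/-- Polynomials are dense in
`H^∞ = {f ∈ C^∞([0,1]) : ∑_ℓ ‖f⁽ℓ⁾‖²_{L²} < ∞}`: for every such `f` and `ε > 0`
there is a polynomial `p` with `∑_ℓ ‖f⁽ℓ⁾ - p⁽ℓ⁾‖²_{L²} ≤ ε²`. -/
theorem stmt_18 (f : ℝ → ℂ) (hf : ContDiff ℝ (⊤ : ℕ∞) f)
    (hsum : Summable (fun ℓ : ℕ => ∫ x in (0:ℝ)..1, ‖iteratedDeriv ℓ f x‖^2))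
    (ε : ℝ) (hε : 0 < ε) :
    ∃ p : Polynomial ℂ,
      Summable (fun ℓ : ℕ => ∫ x in (0:ℝ)..1,
        ‖iteratedDeriv ℓ f x - iteratedDeriv ℓ (fun y : ℝ => p.eval (y : ℂ)) x‖^2) ∧
      (∑' ℓ : ℕ, ∫ x in (0:ℝ)..1,
        ‖iteratedDeriv ℓ f x - iteratedDeriv ℓ (fun y : ℝ => p.eval (y : ℂ)) x‖^2)
        ≤ ε^2 := by
  set A : ℕ → ℝ := fun ℓ => ∫ x in (0:ℝ)..1, ‖iteratedDeriv ℓ f x‖^2 with hA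
  have hAnn : ∀ ℓ, 0 ≤ A ℓ := fun ℓ =>
    intervalIntegral.integral_nonneg (by norm_num) (fun x _ => by positivity)
  obtain ⟨n, hn⟩ : ∃ n, (∑' k, A (k + n)) < ε^2/2 :=
    ((tendsto_sum_nat_add A).eventually (gt_mem_nhds (by positivity : (0:ℝ) < ε^2/2))).exists
  set a : ℕ → ℂ := fun j => iteratedDeriv j f (1/2 : ℝ) with ha
  set r : ℂ := ((1/2 : ℝ) : ℂ) with hr
  set p : Polynomial ℂ :=
    ∑ k ∈ Finset.range n, Polynomial.C (a k / k.factorial) * (Polynomial.X - Polynomial.C r)^k with hp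
  set P : ℕ → ℝ → ℂ := fun ℓ y => ((Polynomial.derivative)^[ℓ] p).eval (y:ℂ) with hP
  have hiter : ∀ ℓ, iteratedDeriv ℓ (fun y : ℝ => p.eval (y:ℂ)) = P ℓ :=
    fun ℓ => iteratedDeriv_polyEval p ℓ
  set g : ℕ → ℝ → ℂ := fun ℓ x => iteratedDeriv ℓ f x - P ℓ x with hg
  set T : ℕ → ℝ := fun ℓ => ∫ x in (0:ℝ)..1, ‖g ℓ x‖^2 with hT
  have hTeq : (fun ℓ : ℕ => ∫ x in (0:ℝ)..1,
      ‖iteratedDeriv ℓ f x - iteratedDeriv ℓ (fun y : ℝ => p.eval (y:ℂ)) x‖^2) = T := by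
    funext ℓ
    rw [hT]
    simp only [hiter ℓ, hg]
  have hPzero : ∀ ℓ, n ≤ ℓ → P ℓ = fun _ => (0:ℂ) := by
    intro ℓ hℓ
    funext y
    rw [hP]
    simp only [hp, iterate_derivative_taylor_zero n a r ℓ hℓ, Polynomial.eval_zero]
  have hTA : ∀ ℓ, n ≤ ℓ → T ℓ = A ℓ := by
    intro ℓ hℓ
    rw [hT, hA]
    simp only [hg, hPzero ℓ hℓ, sub_zero]
  have hgderiv : ∀ ℓ x, HasDerivAt (g ℓ) (g (ℓ+1) x) x := by
    intro ℓ x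
    apply HasDerivAt.sub
    · rw [iteratedDeriv_succ]
      exact ((hf.differentiable_iteratedDeriv ℓ
        (by exact_mod_cast lt_top_iff_ne_top.2 (by simp))) x).hasDerivAt
    · have h := ((Polynomial.derivative^[ℓ] p).hasDerivAt ((x:ℝ):ℂ)).comp_ofReal
      have h2 : P (ℓ+1) x = (Polynomial.derivative ((Polynomial.derivative)^[ℓ] p)).eval (x:ℂ) := by
        simp only [hP]
        rw [Function.iterate_succ_apply']
      rw [h2]
      exact h
  have hgcont : ∀ ℓ, Continuous (g ℓ) := fun ℓ =>
    (hf.continuous_iteratedDeriv ℓ (by exact_mod_cast le_top)).sub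
      ((Polynomial.continuous _).comp Complex.continuous_ofReal)
  have hg0 : ∀ ℓ, ℓ < n → g ℓ (1/2 : ℝ) = 0 := by
    intro ℓ hℓ
    have : P ℓ (1/2 : ℝ) = a ℓ := by
      rw [hP]
      exact iterate_derivative_taylor_eval n a r ℓ hℓ
    rw [hg]
    simp only [this, ha, sub_self]
  have hstep : ∀ ℓ, ℓ < n → T ℓ ≤ (1/2) * T (ℓ+1) :=
    fun ℓ hℓ => poincare_half (g ℓ) (g (ℓ+1)) (hgderiv ℓ) (hgcont (ℓ+1)) (hg0 ℓ hℓ)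
  have hdecay : ∀ j, j ≤ n → T (n - j) ≤ (1/2)^j * A n := by
    intro j
    induction j with
    | zero => intro _; simp [hTA n le_rfl]
    | succ j ih =>
      intro hj
      have h1 : T (n - (j+1)) ≤ (1/2) * T (n - (j+1) + 1) := hstep _ (by omega)
      rw [show n - (j+1) + 1 = n - j by omega] at h1
      have h2 := ih (by omega)
      calc T (n - (j+1)) ≤ (1/2) * T (n-j) := h1
        _ ≤ (1/2) * ((1/2)^j * A n) := by linarith
        _ = (1/2)^(j+1) * A n := by ring
  have hTle : ∀ ℓ, ℓ < n → T ℓ ≤ (1/2)^(n-ℓ) * A n := by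
    intro ℓ hℓ
    have h := hdecay (n - ℓ) (by omega)
    rwa [show n - (n - ℓ) = ℓ by omega] at h
  have hsumshift : Summable (fun k => A (k + n)) := (summable_nat_add_iff n).2 hsum
  have hsumT : Summable T := by
    apply (summable_nat_add_iff n).1
    exact hsumshift.congr (fun k => (hTA (k + n) (by omega)).symm)
  refine ⟨p, ?_, ?_⟩
  · rw [hTeq]; exact hsumT
  rw [hTeq]
  have hsplit : (∑' ℓ, T ℓ) = (∑ i ∈ Finset.range n, T i) + ∑' k, T (k + n) :=
    (Summable.sum_add_tsum_nat_add n hsumT).symm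
  have htail : (∑' k, T (k + n)) = ∑' k, A (k + n) :=
    tsum_congr (fun k => hTA (k + n) (by omega))
  have hhead : (∑ i ∈ Finset.range n, T i) ≤ A n := by
    calc (∑ i ∈ Finset.range n, T i)
        ≤ ∑ i ∈ Finset.range n, (1/2:ℝ)^(n-i) * A n :=
          Finset.sum_le_sum (fun i hi => hTle i (Finset.mem_range.1 hi))
      _ = (∑ i ∈ Finset.range n, (1/2:ℝ)^(n-i)) * A n := by rw [Finset.sum_mul]
      _ ≤ 1 * A n := mul_le_mul_of_nonneg_right (geom_half_sum_le n) (hAnn n)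
      _ = A n := one_mul _
  have hAn_le : A n ≤ ∑' k, A (k + n) := by
    have := Summable.le_tsum hsumshift 0 (fun k _ => hAnn (k + n))
    simpa using this
  rw [hsplit, htail]
  have : ε^2/2 + ε^2/2 = ε^2 := by ring
  linarith
end
end
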